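/- arXiv:0805.4344 — 2 statements merged into one kernel-verified Lean document; each statement's English description precedes it below -/
import Mathlib

section
/- Suppose d ≥ 2 and the averaging operator S along the moment curve maps L^{(d+1)/2}(ℝ^d) boundedly into the Lorentz space L^{p,r}(ℝ^d) with p = d(d+1)/(2(d-1)). Then necessarily r ≥ (d+1)/2. -/
/-
A Knapp-type example. The bump `δ^{-d} 𝟙_B` on the box `B = ∏ᵢ [0, 2δ^{i+1}]` has
`L^{(d+1)/2}` norm independent of `δ`, while its average along the moment curve is at least
`λ = δ^{1-d}` on a box of volume `δ^{d(d+1)/2}`; for `p = d(d+1)/(2(d-1))` this box contributes a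
`δ`-independent amount to the `L^{p,r}` integral near the level `λ`. Placing `L` such bumps
disjointly at scales `δₖ = 2^{-k}`, their levels `2^{k(d-1)}` are separated, so the `L^{p,r}`
quasinorm of the averages grows like `L^{1/r}` while the `L^{(d+1)/2}` norm of the sum grows
like `L^{2/(d+1)}`. Boundedness then forces `1/r ≤ 2/(d+1)`.
-/

open MeasureTheory

/-- The Lorentz `L^{p,r}` quasinorm, `‖f‖_{p,r} = (∫₀^∞ λ^{r-1} μ(|f|>λ)^{r/p} dλ)^{1/r}`
(up to an inessential constant factor). -/
noncomputable def lorentzNorm {α : Type*} [MeasurableSpace α] (μ : Measure α)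
    (f : α → ℝ) (p r : ℝ) : ENNReal :=
  (∫⁻ l in Set.Ioi (0 : ℝ),
      ENNReal.ofReal (l ^ (r - 1)) * (μ {x | l < |f x|}) ^ (r / p)) ^ (1 / r)

/-- The averaging operator along the moment curve, `S f(x) = ∫_{-1}^1 f(x - γ(t)) dt`. -/
noncomputable def momentAvg (d : ℕ) (f : (Fin d → ℝ) → ℝ) : (Fin d → ℝ) → ℝ :=
  fun x => ∫ t in Set.Icc (-1 : ℝ) 1, f (x - fun i : Fin d => t ^ (i.1 + 1))

open Set
open scoped ENNReal

lemma le_of_forall_natCast_mul_rpow_le {a b K s t : ℝ} (ha : 0 < a) (hb : 0 < b)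
    (h : ∀ L : ℕ, 1 ≤ L → ((L : ℝ) * a) ^ s ≤ K * ((L : ℝ) * b) ^ t) : s ≤ t := by
  by_contra! hts
  obtain ⟨L, hLbig, hL⟩ := (((tendsto_rpow_atTop (sub_pos.2 hts)).comp
    tendsto_natCast_atTop_atTop).eventually_gt_atTop (K * b ^ t / a ^ s)).and
    (Filter.eventually_ge_atTop 1) |>.exists
  have hL₀ : (0 : ℝ) < L := by exact_mod_cast hL
  have hgrowth : K * b ^ t < (L : ℝ) ^ (s - t) * a ^ s :=
    (div_lt_iff₀ (Real.rpow_pos_of_pos ha s)).1 hLbig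
  have hsplit : (L : ℝ) ^ s = L ^ t * L ^ (s - t) := by
    rw [← Real.rpow_add hL₀, add_sub_cancel]
  have := h L hL
  rw [Real.mul_rpow hL₀.le ha.le, Real.mul_rpow hL₀.le hb.le, hsplit] at this
  nlinarith [Real.rpow_pos_of_pos hL₀ t]

section LorentzLowerBound

variable {α : Type*} [MeasurableSpace α] {μ : Measure α} {f : α → ℝ} {p r : ℝ}

lemma ofReal_mul_rpow_le_setLIntegral_Ioo (hp : 0 ≤ p) (hr : 0 ≤ r) {lam : ℝ} (hlam : 0 < lam)
    {m : ℝ≥0∞} (hm : m ≤ μ {x | lam ≤ |f x|}) :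
    ENNReal.ofReal (2 ^ (-r - 1) * lam ^ r) * m ^ (r / p) ≤
      ∫⁻ l in Ioo (lam / 2) lam,
        ENNReal.ofReal (l ^ (r - 1)) * μ {x | l < |f x|} ^ (r / p) := by
  have hlower : ∀ l ∈ Ioo (lam / 2) lam,
      ENNReal.ofReal (2 ^ (-r) * lam ^ (r - 1)) * m ^ (r / p) ≤
      ENNReal.ofReal (l ^ (r - 1)) * μ {x | l < |f x|} ^ (r / p) := by
    rintro l ⟨hl₁, hl₂⟩
    have hl : 0 < l := (half_pos hlam).trans hl₁
    gcongr ?_ * ?_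
    · -- writing `l ^ (r - 1) = l ^ r / l` avoids a case split on the sign of `r - 1`
      refine ENNReal.ofReal_le_ofReal ?_
      calc 2 ^ (-r) * lam ^ (r - 1) = (lam / 2) ^ r / lam := by
              rw [Real.div_rpow hlam.le zero_le_two, Real.rpow_sub_one hlam.ne',
                Real.rpow_neg zero_le_two]
              ring
          _ ≤ l ^ r / l := div_le_div₀ (by positivity) (by gcongr) hl hl₂.le
          _ = l ^ (r - 1) := (Real.rpow_sub_one hl.ne' r).symm
    · exact ENNReal.rpow_le_rpow (hm.trans (measure_mono fun x hx => hl₂.trans_le hx))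
        (div_nonneg hr hp)
  calc ENNReal.ofReal (2 ^ (-r - 1) * lam ^ r) * m ^ (r / p)
      = ∫⁻ _ in Ioo (lam / 2) lam, ENNReal.ofReal (2 ^ (-r) * lam ^ (r - 1)) * m ^ (r / p) := by
        rw [setLIntegral_const, Real.volume_Ioo, mul_right_comm,
          ← ENNReal.ofReal_mul (by positivity), Real.rpow_sub_one hlam.ne',
          Real.rpow_sub_one two_ne_zero]
        congr 2
        field_simp
        ring
    _ ≤ _ := setLIntegral_mono' measurableSet_Ioo hlower

lemma sum_rpow_le_lorentzNorm {ι : Type*} (s : Finset ι) (hp : 0 ≤ p) (hr : 0 < r)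
    {lam : ι → ℝ} {m : ι → ℝ≥0∞} (hlam : ∀ k ∈ s, 0 < lam k)
    (hdisj : (s : Set ι).PairwiseDisjoint fun k => Ioo (lam k / 2) (lam k))
    (hm : ∀ k ∈ s, m k ≤ μ {x | lam k ≤ |f x|}) :
    (∑ k ∈ s, ENNReal.ofReal (2 ^ (-r - 1) * lam k ^ r) * m k ^ (r / p)) ^ (1 / r) ≤
      lorentzNorm μ f p r := by
  refine ENNReal.rpow_le_rpow ?_ (by positivity)
  calc _ ≤ ∑ k ∈ s, ∫⁻ l in Ioo (lam k / 2) (lam k),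
          ENNReal.ofReal (l ^ (r - 1)) * μ {x | l < |f x|} ^ (r / p) :=
        Finset.sum_le_sum fun k hk =>
          ofReal_mul_rpow_le_setLIntegral_Ioo hp hr.le (hlam k hk) (hm k hk)
    _ = ∫⁻ l in ⋃ k ∈ s, Ioo (lam k / 2) (lam k),
          ENNReal.ofReal (l ^ (r - 1)) * μ {x | l < |f x|} ^ (r / p) :=
        (lintegral_biUnion_finset hdisj (fun _ _ => measurableSet_Ioo) _).symm
    _ ≤ _ := lintegral_mono_set <|
        iUnion₂_subset fun k hk _ hl => (half_pos (hlam k hk)).trans hl.1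

end LorentzLowerBound

lemma Finset.apply_sum_indicator_of_pairwiseDisjoint {ι β M N : Type*} [AddCommMonoid M]
    [AddCommMonoid N] {s : Finset ι} {S : ι → Set β} (hS : (s : Set ι).PairwiseDisjoint S)
    (g : ι → β → M) {φ : M → N} (hφ : φ 0 = 0) (x : β) :
    φ (∑ k ∈ s, (S k).indicator (g k) x) =
      ∑ k ∈ s, (S k).indicator (fun y => φ (g k y)) x := by
  by_cases hx : ∀ k ∈ s, x ∉ S k
  · rw [Finset.sum_eq_zero fun k hk => indicator_of_notMem (hx k hk) _,
      Finset.sum_eq_zero fun k hk => indicator_of_notMem (hx k hk) _, hφ]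
  obtain ⟨j, hj, hxj⟩ : ∃ j ∈ s, x ∈ S j := by simpa using hx
  have hout : ∀ k ∈ s, k ≠ j → x ∉ S k := fun k hk hkj hxk =>
    Set.disjoint_left.1 (hS hk hj hkj) hxk hxj
  rw [Finset.sum_eq_single_of_mem j hj fun k hk hkj => indicator_of_notMem (hout k hk hkj) _,
    Finset.sum_eq_single_of_mem j hj fun k hk hkj => indicator_of_notMem (hout k hk hkj) _,
    indicator_of_mem hxj, indicator_of_mem hxj]

lemma Fin.sum_val_add_one_mul_two (d : ℕ) : (∑ i : Fin d, (i.1 + 1)) * 2 = d * (d + 1) := by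
  have h := Finset.sum_range_id_mul_two (d + 1)
  rw [Finset.sum_range_succ'] at h
  rw [Fin.sum_univ_eq_sum_range (fun i => i + 1)]
  simpa [mul_comm] using h

lemma Fin.prod_pow_val_add_one_eq_rpow (δ : ℝ) (d : ℕ) :
    ∏ i : Fin d, δ ^ (i.1 + 1) = δ ^ ((d : ℝ) * (d + 1) / 2) := by
  have hsum : ((∑ i : Fin d, (i.1 + 1) : ℕ) : ℝ) = (d : ℝ) * (d + 1) / 2 := by
    rw [eq_div_iff two_ne_zero]
    exact_mod_cast Fin.sum_val_add_one_mul_two d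
  rw [Finset.prod_pow_eq_pow_sum, ← hsum, Real.rpow_natCast]

namespace MomentCurve

variable {d : ℕ}

/-- `momentBox c 0 δ` carries one bump of the counterexample and `momentBox c 1 δ` is where the
average of that bump along the moment curve is large. -/
def momentBox (c : Fin d → ℝ) (a δ : ℝ) : Set (Fin d → ℝ) :=
  univ.pi fun i => Icc (c i + a * δ ^ (i.1 + 1)) (c i + 2 * δ ^ (i.1 + 1))

lemma measurableSet_momentBox (c : Fin d → ℝ) (a δ : ℝ) : MeasurableSet (momentBox c a δ) :=
  MeasurableSet.univ_pi fun _ => measurableSet_Icc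

lemma volume_momentBox (c : Fin d → ℝ) {a δ : ℝ} (ha : a ≤ 2) (hδ : 0 ≤ δ) :
    volume (momentBox c a δ) = ENNReal.ofReal ((2 - a) ^ d * δ ^ ((d : ℝ) * (d + 1) / 2)) := by
  simp only [momentBox, volume_pi_pi, Real.volume_Icc, add_sub_add_left_eq_sub, ← sub_mul]
  rw [← ENNReal.ofReal_prod_of_nonneg fun i _ => mul_nonneg (by linarith) (pow_nonneg hδ _),
    Finset.prod_mul_distrib, Finset.prod_const, Finset.card_univ, Fintype.card_fin,
    Fin.prod_pow_val_add_one_eq_rpow]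

lemma sub_mem_momentBox_zero {c x : Fin d → ℝ} {δ t : ℝ} (hx : x ∈ momentBox c 1 δ)
    (ht : t ∈ Icc 0 δ) : (x - fun i : Fin d => t ^ (i.1 + 1)) ∈ momentBox c 0 δ := by
  simp only [momentBox, mem_univ_pi, mem_Icc, Pi.sub_apply, zero_mul, add_zero, one_mul]
    at hx ⊢
  intro i
  have h₀ : 0 ≤ t ^ (i.1 + 1) := pow_nonneg ht.1 _
  have h₁ : t ^ (i.1 + 1) ≤ δ ^ (i.1 + 1) := pow_le_pow_left₀ ht.1 ht.2 _
  constructor <;> linarith [hx i]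

lemma momentBox_zero_subset (c : Fin d → ℝ) {δ : ℝ} (hδ : δ ∈ Icc 0 1) :
    momentBox c 0 δ ⊆ univ.pi fun i => Icc (c i) (c i + 2) := by
  refine pi_mono fun i _ => Icc_subset_Icc (by simp) ?_
  have : δ ^ (i.1 + 1) ≤ 1 := pow_le_one₀ hδ.1 hδ.2
  linarith

lemma disjoint_momentBox_diagonal (hd : 0 < d) {j k : ℕ} (hjk : j ≠ k) {δ δ' : ℝ}
    (hδ : δ ∈ Icc 0 1) (hδ' : δ' ∈ Icc 0 1) :
    Disjoint (momentBox (fun _ : Fin d => 3 * (j : ℝ)) 0 δ)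
      (momentBox (fun _ => 3 * (k : ℝ)) 0 δ') := by
  refine Disjoint.mono (momentBox_zero_subset _ hδ) (momentBox_zero_subset _ hδ') ?_
  refine disjoint_pi.2 ⟨⟨0, hd⟩, mem_univ _, disjoint_left.2 ?_⟩
  rintro y ⟨hj₁, hj₂⟩ ⟨hk₁, hk₂⟩
  have : (j : ℝ) < k + 1 := by linarith
  have : (k : ℝ) < j + 1 := by linarith
  norm_cast at *
  omega

lemma mul_le_momentAvg {f : (Fin d → ℝ) → ℝ} (hf : Measurable f) (hf₀ : 0 ≤ f)
    (hbdd : BddAbove (range f)) {A : Set (Fin d → ℝ)} {c δ : ℝ} {x : Fin d → ℝ}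
    (hδ : δ ∈ Icc 0 1) (hcurve : ∀ t ∈ Icc 0 δ, (x - fun i : Fin d => t ^ (i.1 + 1)) ∈ A)
    (hA : ∀ y ∈ A, c ≤ f y) : c * δ ≤ momentAvg d f x := by
  obtain ⟨B, hB⟩ := hbdd
  have hint : IntegrableOn (fun t : ℝ => f (x - fun i : Fin d => t ^ (i.1 + 1))) (Icc (-1) 1) :=
    Measure.integrableOn_of_bounded (M := B) (by simp) (hf.comp (by fun_prop)).aestronglyMeasurable
      (ae_of_all _ fun t => (Real.norm_of_nonneg (hf₀ _)).trans_le (hB (mem_range_self _)))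
  have hsub : Icc 0 δ ⊆ Icc (-1 : ℝ) 1 := Icc_subset_Icc (by norm_num) hδ.2
  calc c * δ = volume.real (Icc 0 δ) • c := by simp [hδ.1, mul_comm]
    _ ≤ ∫ t in Icc 0 δ, f (x - fun i : Fin d => t ^ (i.1 + 1)) :=
      setIntegral_ge_of_const_le measurableSet_Icc (by simp) (fun t ht => hA _ (hcurve t ht))
        (hint.mono_set hsub)
    _ ≤ momentAvg d f x :=
      setIntegral_mono_set hint (ae_of_all _ fun _ => hf₀ _) hsub.eventuallyLE

noncomputable def bumpHeight (d : ℕ) (δ : ℝ) : ℝ := δ ^ (-(d : ℝ))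

lemma bumpHeight_nonneg (d : ℕ) {δ : ℝ} (hδ : 0 ≤ δ) : 0 ≤ bumpHeight d δ :=
  Real.rpow_nonneg hδ _

lemma bumpHeight_rpow_mul_rpow_eq_one (d : ℕ) {δ : ℝ} (hδ : 0 < δ) :
    bumpHeight d δ ^ (((d : ℝ) + 1) / 2) * δ ^ ((d : ℝ) * (d + 1) / 2) = 1 := by
  rw [bumpHeight, ← Real.rpow_mul hδ.le, ← Real.rpow_add hδ,
    show -(d : ℝ) * ((d + 1) / 2) + d * (d + 1) / 2 = 0 by ring, Real.rpow_zero]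

lemma bumpHeight_mul_rpow_mul_rpow_eq_one (hd : 2 ≤ d) {δ : ℝ} (hδ : 0 < δ) (r : ℝ) :
    (bumpHeight d δ * δ) ^ r *
      (δ ^ ((d : ℝ) * (d + 1) / 2)) ^ (r / ((d : ℝ) * (d + 1) / (2 * (d - 1)))) = 1 := by
  have hd' : (2 : ℝ) ≤ d := by exact_mod_cast hd
  have hd₀ : (d : ℝ) ≠ 0 := by positivity
  have hd₁ : (d : ℝ) - 1 ≠ 0 := by linarith
  rw [bumpHeight, ← Real.rpow_add_one hδ.ne', ← Real.rpow_mul hδ.le, ← Real.rpow_mul hδ.le,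
    ← Real.rpow_add hδ]
  convert Real.rpow_zero δ
  field_simp
  ring

noncomputable def bumpScale (k : ℕ) : ℝ := 2 ^ (-(k : ℝ))

lemma bumpScale_pos (k : ℕ) : 0 < bumpScale k := by
  unfold bumpScale
  positivity

lemma bumpScale_mem_Icc (k : ℕ) : bumpScale k ∈ Icc 0 1 :=
  ⟨(bumpScale_pos k).le, Real.rpow_le_one_of_one_le_of_nonpos one_le_two (by simp)⟩

lemma bumpHeight_bumpScale_mul (d k : ℕ) :
    bumpHeight d (bumpScale k) * bumpScale k = 2 ^ ((k : ℝ) * (d - 1)) := by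
  rw [bumpHeight, bumpScale, ← Real.rpow_add_one (by positivity), ← Real.rpow_mul zero_le_two]
  ring_nf

lemma pairwiseDisjoint_Ioo_bumpLevel (hd : 2 ≤ d) (s : Set ℕ) :
    s.PairwiseDisjoint fun k =>
      Ioo (bumpHeight d (bumpScale k) * bumpScale k / 2)
        (bumpHeight d (bumpScale k) * bumpScale k) := by
  refine Pairwise.set_pairwise ((pairwise_disjoint_on _).2 fun j k hjk => ?_) s
  have hd' : (2 : ℝ) ≤ d := by exact_mod_cast hd
  have hjk' : (j : ℝ) + 1 ≤ k := by exact_mod_cast hjk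
  have hdouble : (2 : ℝ) * 2 ^ ((j : ℝ) * (d - 1)) ≤ 2 ^ ((k : ℝ) * (d - 1)) := by
    rw [mul_comm, ← Real.rpow_add_one two_ne_zero]
    exact Real.rpow_le_rpow_of_exponent_le one_le_two (by nlinarith)
  simp only [bumpHeight_bumpScale_mul]
  exact Ioo_disjoint_Ioo.2 ((min_le_left _ _).trans (le_max_of_le_right (by linarith)))

def bumpBox (d k : ℕ) (a : ℝ) : Set (Fin d → ℝ) :=
  momentBox (fun _ => 3 * (k : ℝ)) a (bumpScale k)

lemma measurableSet_bumpBox (d k : ℕ) (a : ℝ) : MeasurableSet (bumpBox d k a) :=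
  measurableSet_momentBox _ _ _

lemma pairwiseDisjoint_bumpBox (hd : 0 < d) (s : Set ℕ) :
    s.PairwiseDisjoint fun k => bumpBox d k 0 := fun j _ k _ hjk =>
  disjoint_momentBox_diagonal hd hjk (bumpScale_mem_Icc j) (bumpScale_mem_Icc k)

noncomputable def testFunction (d L : ℕ) (x : Fin d → ℝ) : ℝ :=
  ∑ k ∈ Finset.range L, (bumpBox d k 0).indicator (fun _ => bumpHeight d (bumpScale k)) x

lemma measurable_testFunction (d L : ℕ) : Measurable (testFunction d L) :=
  Finset.measurable_sum _ fun _ _ => measurable_const.indicator (measurableSet_bumpBox _ _ _)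

lemma testFunction_nonneg (d L : ℕ) : 0 ≤ testFunction d L := fun x =>
  Finset.sum_nonneg fun k _ =>
    indicator_nonneg (fun _ _ => bumpHeight_nonneg d (bumpScale_pos k).le) x

lemma bddAbove_range_testFunction (d L : ℕ) : BddAbove (range (testFunction d L)) :=
  ⟨∑ k ∈ Finset.range L, bumpHeight d (bumpScale k), forall_mem_range.2 fun x =>
    Finset.sum_le_sum fun k _ =>
      indicator_le_self' (fun _ _ => bumpHeight_nonneg d (bumpScale_pos k).le) x⟩

lemma le_testFunction {L k : ℕ} (hk : k < L) {x : Fin d → ℝ} (hx : x ∈ bumpBox d k 0) :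
    bumpHeight d (bumpScale k) ≤ testFunction d L x := by
  rw [← indicator_of_mem hx fun _ => bumpHeight d (bumpScale k)]
  exact Finset.single_le_sum (f := fun k => (bumpBox d k 0).indicator _ x)
    (fun j _ => indicator_nonneg (fun _ _ => bumpHeight_nonneg d (bumpScale_pos j).le) x)
    (Finset.mem_range.2 hk)

lemma le_momentAvg_testFunction {L k : ℕ} (hk : k < L) {x : Fin d → ℝ}
    (hx : x ∈ bumpBox d k 1) :
    bumpHeight d (bumpScale k) * bumpScale k ≤ momentAvg d (testFunction d L) x :=
  mul_le_momentAvg (measurable_testFunction d L) (testFunction_nonneg d L)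
    (bddAbove_range_testFunction d L) (bumpScale_mem_Icc k)
    (fun _ ht => sub_mem_momentBox_zero hx ht) fun _ hy => le_testFunction hk hy

lemma eLpNorm_testFunction (hd : 0 < d) (L : ℕ) :
    eLpNorm (testFunction d L) (ENNReal.ofReal (((d : ℝ) + 1) / 2)) volume =
      ENNReal.ofReal (L * 2 ^ d) ^ (1 / (((d : ℝ) + 1) / 2)) := by
  set q : ℝ := ((d : ℝ) + 1) / 2
  have hq : 0 < q := by positivity
  have hpointwise : ∀ x, ‖testFunction d L x‖ₑ ^ q = ∑ k ∈ Finset.range L,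
      (bumpBox d k 0).indicator (fun _ => ‖bumpHeight d (bumpScale k)‖ₑ ^ q) x :=
    Finset.apply_sum_indicator_of_pairwiseDisjoint (pairwiseDisjoint_bumpBox hd _) _
      (φ := fun y : ℝ => ‖y‖ₑ ^ q) (by simp [hq])
  have hbump : ∀ k, ‖bumpHeight d (bumpScale k)‖ₑ ^ q * volume (bumpBox d k 0) =
      ENNReal.ofReal (2 ^ d) := fun k => by
    rw [Real.enorm_eq_ofReal (bumpHeight_nonneg d (bumpScale_pos k).le),
      ENNReal.ofReal_rpow_of_nonneg (bumpHeight_nonneg d (bumpScale_pos k).le) hq.le, bumpBox,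
      volume_momentBox _ zero_le_two (bumpScale_pos k).le,
      ← ENNReal.ofReal_mul (Real.rpow_nonneg (bumpHeight_nonneg d (bumpScale_pos k).le) _),
      sub_zero, mul_left_comm,
      bumpHeight_rpow_mul_rpow_eq_one d (bumpScale_pos k), mul_one]
  rw [eLpNorm_eq_lintegral_rpow_enorm_toReal (by simpa using hq) ENNReal.ofReal_ne_top,
    ENNReal.toReal_ofReal hq.le, lintegral_congr hpointwise,
    lintegral_finsetSum _ fun _ _ => measurable_const.indicator (measurableSet_bumpBox _ _ _)]
  simp_rw [lintegral_indicator_const (measurableSet_bumpBox _ _ _), hbump]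
  rw [Finset.sum_const, Finset.card_range, nsmul_eq_mul, ENNReal.ofReal_mul (Nat.cast_nonneg L),
    ENNReal.ofReal_natCast]

lemma ofReal_rpow_le_lorentzNorm_momentAvg_testFunction (hd : 2 ≤ d) {r : ℝ} (hr : 0 < r)
    (L : ℕ) :
    ENNReal.ofReal (L * 2 ^ (-r - 1)) ^ (1 / r) ≤
      lorentzNorm volume (momentAvg d (testFunction d L))
        ((d : ℝ) * (d + 1) / (2 * (d - 1))) r := by
  set p : ℝ := (d : ℝ) * (d + 1) / (2 * (d - 1))
  have hd' : (2 : ℝ) ≤ d := by exact_mod_cast hd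
  have hp : 0 ≤ p := div_nonneg (by positivity) (by linarith)
  have hbump : ∀ k,
      ENNReal.ofReal (2 ^ (-r - 1) * (bumpHeight d (bumpScale k) * bumpScale k) ^ r) *
      volume (bumpBox d k 1) ^ (r / p) = ENNReal.ofReal (2 ^ (-r - 1)) := fun k => by
    have hδ := bumpScale_pos k
    have hlevel : 0 ≤ bumpHeight d (bumpScale k) * bumpScale k :=
      mul_nonneg (bumpHeight_nonneg d hδ.le) hδ.le
    rw [bumpBox, volume_momentBox _ one_le_two hδ.le,
      show (2 : ℝ) - 1 = 1 by norm_num, one_pow, one_mul,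
      ENNReal.ofReal_rpow_of_nonneg (by positivity) (div_nonneg hr.le hp),
      ← ENNReal.ofReal_mul (mul_nonneg (by positivity) (Real.rpow_nonneg hlevel r)), mul_assoc,
      bumpHeight_mul_rpow_mul_rpow_eq_one hd hδ, mul_one]
  convert sum_rpow_le_lorentzNorm (Finset.range L) hp hr
    (fun k _ => mul_pos (Real.rpow_pos_of_pos (bumpScale_pos k) _) (bumpScale_pos k))
    (pairwiseDisjoint_Ioo_bumpLevel hd _) fun k hk => measure_mono fun x hx =>
      (le_momentAvg_testFunction (Finset.mem_range.1 hk) hx).trans (le_abs_self _) using 2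
  rw [Finset.sum_congr rfl fun k _ => hbump k, Finset.sum_const, Finset.card_range, nsmul_eq_mul,
    ENNReal.ofReal_mul (Nat.cast_nonneg L), ENNReal.ofReal_natCast]

end MomentCurve

open MomentCurve

theorem stmt_14_general (d : ℕ) (hd : 2 ≤ d) (r : ℝ) (hr : 0 < r) (C : ℝ)
    (hbound : ∀ f : (Fin d → ℝ) → ℝ, Measurable f →
      lorentzNorm volume (momentAvg d f) ((d : ℝ) * (d + 1) / (2 * (d - 1))) r ≤
        ENNReal.ofReal C * eLpNorm f (ENNReal.ofReal (((d : ℝ) + 1) / 2)) volume) :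
    ((d : ℝ) + 1) / 2 ≤ r := by
  have hq : (0 : ℝ) < ((d : ℝ) + 1) / 2 := by positivity
  have hgrowth : ∀ L : ℕ, 1 ≤ L →
      ((L : ℝ) * 2 ^ (-r - 1)) ^ (1 / r) ≤
        C * ((L : ℝ) * 2 ^ d) ^ (1 / (((d : ℝ) + 1) / 2)) := by
    intro L hL
    have hL₀ : (0 : ℝ) < L := by exact_mod_cast hL
    have h := (ofReal_rpow_le_lorentzNorm_momentAvg_testFunction hd hr L).trans
      ((hbound _ (measurable_testFunction d L)).trans_eq
        (by rw [eLpNorm_testFunction (by omega)]))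
    rw [ENNReal.ofReal_rpow_of_nonneg (by positivity) (by positivity),
      ENNReal.ofReal_rpow_of_nonneg (by positivity) (by positivity),
      ← ENNReal.ofReal_mul' (by positivity),
      ENNReal.ofReal_le_ofReal_iff'] at h
    exact h.resolve_right (not_le.2 (by positivity))
  exact (one_div_le_one_div hr hq).1
    (le_of_forall_natCast_mul_rpow_le (by positivity) (by positivity) hgrowth)

/-- If the averaging operator along the moment curve maps `L^{(d+1)/2}(ℝ^d)` into
the Lorentz space `L^{p,r}(ℝ^d)` with `p = d(d+1)/(2(d-1))`, then `r ≥ (d+1)/2`. -/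
theorem stmt_14 (d : ℕ) (hd : 2 ≤ d) (r : ℝ) (hr : 0 < r) (C : ℝ) (hC : 0 < C)
    (hbound : ∀ f : (Fin d → ℝ) → ℝ, Measurable f →
      lorentzNorm volume (momentAvg d f) ((d : ℝ) * (d + 1) / (2 * (d - 1))) r ≤
        ENNReal.ofReal C * eLpNorm f (ENNReal.ofReal (((d : ℝ) + 1) / 2)) volume) :
    ((d : ℝ) + 1) / 2 ≤ r :=
  stmt_14_general d hd r hr C hbound
end

section
/- Let ℙ = (P₁, P₂) be a polynomial curve, and let J be an interval on which P₁' and L_ℙ = det(ℙ', ℙ'') are both nonvanishing and single-signed. Then the map Φ(s,t) = ℙ(t) − ℙ(s) is injective on {(s,t) ∈ J² : s < t}. -/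
/-!
By Cauchy's mean value theorem, the chord ratio `(P₂(v) - P₂(u)) / (P₁(v) - P₁(u))` of every
subinterval `[u, v]` of `J` is a value `ψ(c)` of `ψ = P₂' / P₁'` at an interior point `c`. Since
`ψ' = L_ℙ / P₁'²` does not vanish, `ψ` is injective on `J`, so two non-overlapping subintervals
never have the same chord ratio. If `Φ(s, t) = Φ(s', t')` with `s < s'`, then either `[s, t]`
and `[s', t']`, or `[s, s']` and the interval between `t` and `t'`, are two such subintervals
with equal chord ratios.
-/

open Polynomial Set

section IncrementMap

variable {f g f' g' : ℝ → ℝ} {J : Set ℝ} {u v u' v' : ℝ}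

theorem injOn_of_hasDerivAt_ne_zero (hJ : J.OrdConnected)
    (hf : ∀ x ∈ J, HasDerivAt f (f' x) x) (hf' : ∀ x ∈ J, f' x ≠ 0) : InjOn f J := by
  suffices key : ∀ u ∈ J, ∀ v ∈ J, u < v → f u ≠ f v by
    intro u hu v hv huv
    by_contra hne
    rcases lt_or_gt_of_ne hne with h | h
    exacts [key u hu v hv h huv, key v hv u hu h huv.symm]
  intro u hu v hv huv hfuv
  obtain ⟨c, hc, hslope⟩ := exists_hasDerivAt_eq_slope f f' huv
    (fun x hx => (hf x (hJ.out hu hv hx)).continuousAt.continuousWithinAt)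
    (fun x hx => hf x (hJ.out hu hv (Ioo_subset_Icc_self hx)))
  exact hf' c (hJ.out hu hv (Ioo_subset_Icc_self hc)) (by simp [hslope, hfuv])

theorem exists_mem_Ioo_div_eq_div_sub (hJ : J.OrdConnected)
    (hf : ∀ x ∈ J, HasDerivAt f (f' x) x) (hg : ∀ x ∈ J, HasDerivAt g (g' x) x)
    (hf' : ∀ x ∈ J, f' x ≠ 0) (hu : u ∈ J) (hv : v ∈ J) (huv : u < v) :
    ∃ c ∈ Ioo u v, g' c / f' c = (g v - g u) / (f v - f u) := by
  have hsub : Icc u v ⊆ J := hJ.out hu hv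
  obtain ⟨c, hc, hcauchy⟩ := exists_ratio_hasDerivAt_eq_ratio_slope f f' huv
    (fun x hx => (hf x (hsub hx)).continuousAt.continuousWithinAt)
    (fun x hx => hf x (hsub (Ioo_subset_Icc_self hx))) g g'
    (fun x hx => (hg x (hsub hx)).continuousAt.continuousWithinAt)
    (fun x hx => hg x (hsub (Ioo_subset_Icc_self hx)))
  have hfuv : f v - f u ≠ 0 :=
    sub_ne_zero.2 fun h => huv.ne' (injOn_of_hasDerivAt_ne_zero hJ hf hf' hv hu h)
  refine ⟨c, hc, ?_⟩
  rw [div_eq_div_iff (hf' c (hsub (Ioo_subset_Icc_self hc))) hfuv]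
  linarith

theorem div_sub_ne_div_sub_of_lt_of_le (hJ : J.OrdConnected)
    (hf : ∀ x ∈ J, HasDerivAt f (f' x) x) (hg : ∀ x ∈ J, HasDerivAt g (g' x) x)
    (hf' : ∀ x ∈ J, f' x ≠ 0) (hψ : InjOn (fun x => g' x / f' x) J)
    (hu : u ∈ J) (hv' : v' ∈ J) (huv : u < v) (hvu' : v ≤ u') (hu'v' : u' < v') :
    (g v - g u) / (f v - f u) ≠ (g v' - g u') / (f v' - f u') := by
  have hv : v ∈ J := hJ.out hu hv' ⟨huv.le, hvu'.trans hu'v'.le⟩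
  have hu' : u' ∈ J := hJ.out hu hv' ⟨huv.le.trans hvu', hu'v'.le⟩
  obtain ⟨c, hc, hψc⟩ := exists_mem_Ioo_div_eq_div_sub hJ hf hg hf' hu hv huv
  obtain ⟨c', hc', hψc'⟩ := exists_mem_Ioo_div_eq_div_sub hJ hf hg hf' hu' hv' hu'v'
  intro h
  have hcc' : c = c' :=
    hψ (hJ.out hu hv (Ioo_subset_Icc_self hc)) (hJ.out hu' hv' (Ioo_subset_Icc_self hc'))
      (by simp only [hψc, hψc', h])
  exact (hc.2.trans_le (hvu'.trans hc'.1.le)).ne hcc'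

theorem injOn_increment_map (hJ : J.OrdConnected)
    (hf : ∀ x ∈ J, HasDerivAt f (f' x) x) (hg : ∀ x ∈ J, HasDerivAt g (g' x) x)
    (hf' : ∀ x ∈ J, f' x ≠ 0) (hψ : InjOn (fun x => g' x / f' x) J) :
    InjOn (fun p : ℝ × ℝ => (f p.2 - f p.1, g p.2 - g p.1))
      {p : ℝ × ℝ | p.1 ∈ J ∧ p.2 ∈ J ∧ p.1 < p.2} := by
  rintro ⟨s, t⟩ ⟨hs, ht, hst⟩ ⟨s', t'⟩ ⟨hs', ht', hs't'⟩ heq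
  simp only [Prod.mk.injEq] at hs ht hst hs' ht' hs't' heq ⊢
  obtain ⟨hΔf, hΔg⟩ := heq
  wlog hss' : s ≤ s' generalizing s t s' t'
  · exact (this s' t' hs' ht' hs't' s t hs ht hst hΔf.symm hΔg.symm (le_of_not_ge hss')).imp
      Eq.symm Eq.symm
  have hfinj := injOn_of_hasDerivAt_ne_zero hJ hf hf'
  rcases hss'.eq_or_lt with rfl | hss'
  · exact ⟨rfl, hfinj ht ht' (by linarith)⟩
  exfalso
  rcases le_or_gt t s' with hts' | hs't
  · exact div_sub_ne_div_sub_of_lt_of_le hJ hf hg hf' hψ hs ht' hst hts' hs't' (by rw [hΔf, hΔg])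
  rcases lt_trichotomy t t' with htt' | rfl | ht't
  · refine div_sub_ne_div_sub_of_lt_of_le hJ hf hg hf' hψ hs ht' hss' hs't.le htt' ?_
    rw [show f s' - f s = f t' - f t by linarith, show g s' - g s = g t' - g t by linarith]
  · exact hss'.ne (hfinj hs hs' (by linarith))
  · refine div_sub_ne_div_sub_of_lt_of_le hJ hf hg hf' hψ hs ht hss' hs't'.le ht't ?_
    rw [show f s' - f s = -(f t - f t') by linarith, show g s' - g s = -(g t - g t') by linarith,
      neg_div_neg_eq]

end IncrementMap

theorem ne_zero_of_forall_pos_or_forall_neg {φ : ℝ → ℝ} {J : Set ℝ}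
    (h : (∀ w ∈ J, 0 < φ w) ∨ (∀ w ∈ J, φ w < 0)) : ∀ w ∈ J, φ w ≠ 0 := by
  rcases h with h | h <;> intro w hw
  exacts [(h w hw).ne', (h w hw).ne]

/-- Injectivity of `Φ(s,t) = ℙ(t) − ℙ(s)` on `{(s,t) ∈ J² : s < t}` when `P₁'` and
`L_ℙ = P₁' P₂'' − P₂' P₁''` are nonvanishing and single-signed on the interval `J`. -/
theorem stmt_17 (P₁ P₂ : Polynomial ℝ) (J : Set ℝ) (hJ : J.OrdConnected)
    (hP₁ : (∀ w ∈ J, 0 < P₁.derivative.eval w) ∨ (∀ w ∈ J, P₁.derivative.eval w < 0))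
    (hL : (∀ w ∈ J,
        0 < (P₁.derivative * P₂.derivative.derivative -
          P₂.derivative * P₁.derivative.derivative).eval w) ∨
      (∀ w ∈ J,
        (P₁.derivative * P₂.derivative.derivative -
          P₂.derivative * P₁.derivative.derivative).eval w < 0)) :
    Set.InjOn
      (fun p : ℝ × ℝ => (P₁.eval p.2 - P₁.eval p.1, P₂.eval p.2 - P₂.eval p.1))
      {p : ℝ × ℝ | p.1 ∈ J ∧ p.2 ∈ J ∧ p.1 < p.2} := by
  have hP₁' := ne_zero_of_forall_pos_or_forall_neg hP₁
  have hL' := ne_zero_of_forall_pos_or_forall_neg hL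
  have hψ' : ∀ x ∈ J, HasDerivAt (fun x => P₂.derivative.eval x / P₁.derivative.eval x)
      ((P₁.derivative * P₂.derivative.derivative -
        P₂.derivative * P₁.derivative.derivative).eval x / P₁.derivative.eval x ^ 2) x := by
    intro x hx
    refine ((P₂.derivative.hasDerivAt x).fun_div (P₁.derivative.hasDerivAt x)
      (hP₁' x hx)).congr_deriv ?_
    simp only [eval_sub, eval_mul]
    ring
  refine injOn_increment_map hJ (fun x _ => P₁.hasDerivAt x) (fun x _ => P₂.hasDerivAt x) hP₁'
    (injOn_of_hasDerivAt_ne_zero hJ hψ' fun x hx => ?_)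
  exact div_ne_zero (hL' x hx) (pow_ne_zero 2 (hP₁' x hx))
end
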